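/- arXiv:math/0003053 — 3 statements merged into one kernel-verified Lean document; each statement's English description precedes it below -/
import Mathlib

section
/- Let H be a Hilbert space, E: H₀ → H and π_*: H → H₀ bounded maps with π_* = E^* (adjoint), and let J: H → H', S: H₀ → H₀' be unitaries with relations E' ∘ S = J ∘ E, π_*' ∘ (J')^* = S'^* ∘ π_*, and S ∘ S'^* = Id (where primes denote the corresponding maps on H', H₀'). Then for any trace-class localization χ, χ₁ on H' with χ ∘ (E' π_*' − 1) ∘ χ₁ trace class, Tr[χ ∘ J ∘ (E π_* − 1) ∘ (J')^* ∘ χ₁] = Tr[χ ∘ (E' π_*' − 1) ∘ χ₁]. In particular if the right-hand side vanishes so does the left. -/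
namespace ContinuousLinearMap

variable {R M M' N N' : Type*}

section Semiring

variable [Semiring R]
  [TopologicalSpace M] [AddCommMonoid M] [Module R M]
  [TopologicalSpace M'] [AddCommMonoid M'] [Module R M']
  [TopologicalSpace N] [AddCommMonoid N] [Module R N]
  [TopologicalSpace N'] [AddCommMonoid N'] [Module R N']

theorem comp_comp_eq_of_intertwining {A : N →L[R] M} {B : M →L[R] N}
    {A' : N' →L[R] M'} {B' : M' →L[R] N'} {J : M →L[R] M'} {K : M' →L[R] M}
    {S : N →L[R] N'} {T : N' →L[R] N}
    (hA : A' ∘L S = J ∘L A) (hB : B ∘L K = T ∘L B') (hST : S ∘L T = 1) :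
    J ∘L (A ∘L B) ∘L K = A' ∘L B' :=
  calc J ∘L (A ∘L B) ∘L K = (J ∘L A) ∘L (B ∘L K) := by simp only [comp_assoc]
    _ = A' ∘L (S ∘L T) ∘L B' := by rw [← hA, hB]; simp only [comp_assoc]
    _ = A' ∘L B' := by rw [hST, one_def, id_comp]

end Semiring

section Ring

variable [Ring R]
  [TopologicalSpace M] [AddCommGroup M] [IsTopologicalAddGroup M] [Module R M]
  [TopologicalSpace M'] [AddCommGroup M'] [IsTopologicalAddGroup M'] [Module R M']
  [TopologicalSpace N] [AddCommGroup N] [Module R N]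
  [TopologicalSpace N'] [AddCommGroup N'] [Module R N']

theorem comp_sub_one_comp_eq_of_intertwining {A : N →L[R] M} {B : M →L[R] N}
    {A' : N' →L[R] M'} {B' : M' →L[R] N'} {J : M →L[R] M'} {K : M' →L[R] M}
    {S : N →L[R] N'} {T : N' →L[R] N}
    (hA : A' ∘L S = J ∘L A) (hB : B ∘L K = T ∘L B') (hST : S ∘L T = 1)
    (hJK : J ∘L K = 1) :
    J ∘L (A ∘L B - 1) ∘L K = A' ∘L B' - 1 := by
  rw [sub_comp, comp_sub, comp_comp_eq_of_intertwining hA hB hST, one_def, id_comp, hJK]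

end Ring

end ContinuousLinearMap

open ContinuousLinearMap in
theorem stmt_3_general
    {ι : Type*}
    {H H' H₀ H₀' : Type*}
    [NormedAddCommGroup H] [InnerProductSpace ℂ H] [CompleteSpace H]
    [NormedAddCommGroup H'] [InnerProductSpace ℂ H'] [CompleteSpace H']
    [NormedAddCommGroup H₀] [InnerProductSpace ℂ H₀] [CompleteSpace H₀]
    [NormedAddCommGroup H₀'] [InnerProductSpace ℂ H₀'] [CompleteSpace H₀']
    (E : H₀ →L[ℂ] H) (E' : H₀' →L[ℂ] H')
    (J J' : H →L[ℂ] H') (S S' : H₀ →L[ℂ] H₀')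
    -- intertwining relations
    (h1 : E' ∘L S = J ∘L E)
    (h2 : E.adjoint ∘L J'.adjoint = S'.adjoint ∘L E'.adjoint)
    (h3 : S ∘L S'.adjoint = 1)
    (h4 : J ∘L J'.adjoint = 1)
    -- trace-class localizations
    (χ χ₁ : H' →L[ℂ] H')
    (b : HilbertBasis ι ℂ H') :
    ∑' i, (inner ℂ ((χ ∘L J ∘L ((E ∘L E.adjoint) - 1) ∘L J'.adjoint ∘L χ₁) (b i)) (b i) : ℂ)
      = ∑' i, (inner ℂ ((χ ∘L ((E' ∘L E'.adjoint) - 1) ∘L χ₁) (b i)) (b i) : ℂ) := by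
  rw [← comp_assoc _ J'.adjoint χ₁, ← comp_assoc J,
    comp_sub_one_comp_eq_of_intertwining h1 h2 h3 h4]

/-- abstract form of Lemma 5.2: trace identity for intertwined
extension/push-down maps.  `E : H₀ → H`, `π_* = E^*`, and unitaries
`J : H → H'`, `S : H₀ → H₀'` satisfying `E' ∘ S = J ∘ E`,
`π_* ∘ (J')^* = (S')^* ∘ π_*'`, `S ∘ (S')^* = 1` and the functional equation
`J ∘ (J')^* = 1`.  Then for trace-class localizations `χ, χ₁` on `H'`
(trace computed in a Hilbert basis `b`),
`Tr[χ ∘ J ∘ (E π_* − 1) ∘ (J')^* ∘ χ₁] = Tr[χ ∘ (E' π_*' − 1) ∘ χ₁]`. -/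
theorem stmt_3
    {ι : Type*}
    {H H' H₀ H₀' : Type*}
    [NormedAddCommGroup H] [InnerProductSpace ℂ H] [CompleteSpace H]
    [NormedAddCommGroup H'] [InnerProductSpace ℂ H'] [CompleteSpace H']
    [NormedAddCommGroup H₀] [InnerProductSpace ℂ H₀] [CompleteSpace H₀]
    [NormedAddCommGroup H₀'] [InnerProductSpace ℂ H₀'] [CompleteSpace H₀']
    (E : H₀ →L[ℂ] H) (E' : H₀' →L[ℂ] H')
    (J J' : H →L[ℂ] H') (S S' : H₀ →L[ℂ] H₀')
    -- J and S are unitary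
    (hJ : J.adjoint ∘L J = 1 ∧ J ∘L J.adjoint = 1)
    (hS : S.adjoint ∘L S = 1 ∧ S ∘L S.adjoint = 1)
    -- intertwining relations
    (h1 : E' ∘L S = J ∘L E)
    (h2 : E.adjoint ∘L J'.adjoint = S'.adjoint ∘L E'.adjoint)
    (h3 : S ∘L S'.adjoint = 1)
    (h4 : J ∘L J'.adjoint = 1)
    -- trace-class localizations
    (χ χ₁ : H' →L[ℂ] H')
    (b : HilbertBasis ι ℂ H')
    (hTr : Summable fun i =>
      (inner ℂ ((χ ∘L ((E' ∘L E'.adjoint) - 1) ∘L χ₁) (b i)) (b i) : ℂ)) :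
    ∑' i, (inner ℂ ((χ ∘L J ∘L ((E ∘L E.adjoint) - 1) ∘L J'.adjoint ∘L χ₁) (b i)) (b i) : ℂ)
      = ∑' i, (inner ℂ ((χ ∘L ((E' ∘L E'.adjoint) - 1) ∘L χ₁) (b i)) (b i) : ℂ) :=
  stmt_3_general E E' J J' S S' h1 h2 h3 h4 χ χ₁ b
end

section
/- Let Γ be a discrete group of isometries of a complete Riemannian manifold X, and suppose a kernel r(z)(x,y) satisfies |r(z)(x,y)| ≤ C e^{−d(x,y)·s} with s > δ_Γ + ρ, where Σ_{γ∈Γ} e^{−(δ_Γ+ρ+ε)d(x,γy)} < ∞ locally uniformly. Then the series Σ_{1≠γ∈Γ} r(z)(x, γy) converges locally uniformly on X×X ∖ S, where S = ∪_{1≠γ∈Γ}(1×γ)Δ, and defines a Γ×Γ-invariant function bounded by C' e^{−r·d₀(x,y)} for any r < s − δ_Γ − ρ, where d₀(x,y) := inf_{1≠γ∈Γ} d(x, γy). -/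
/-! Each term is dominated by `C e^{-s d(x, γy)}`. Writing `s ≥ r' + t` with `t > δ + ρ`, the
factor `e^{-r' d(x, γy)}` is at most `e^{-r' d₀(x, y)}`, and what remains is the Poincaré series
at exponent `t`, which is uniformly bounded. Invariance comes from `r(γ₀x, γγ₀y) = r(x, γ₀⁻¹γγ₀ y)`
and reindexing the nontrivial elements by conjugation. -/

open Real

section ExponentialMajorant

variable {ι E : Type*} [NormedAddCommGroup E] {d : ι → ℝ} {f : ι → E} {C s t : ℝ}

lemma exp_neg_mul_le_exp_neg_mul_of_le {a t s : ℝ} (ha : 0 ≤ a) (hts : t ≤ s) :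
    exp (-s * a) ≤ exp (-t * a) :=
  exp_le_exp.2 (by nlinarith)

lemma summable_of_norm_le_mul_exp_neg_mul [CompleteSpace E] (hd : ∀ i, 0 ≤ d i)
    (hf : ∀ i, ‖f i‖ ≤ C * exp (-s * d i)) (hC : 0 ≤ C) (hts : t ≤ s)
    (ht : Summable fun i => exp (-t * d i)) : Summable f :=
  (ht.mul_left C).of_norm_bounded fun i =>
    (hf i).trans (mul_le_mul_of_nonneg_left (exp_neg_mul_le_exp_neg_mul_of_le (hd i) hts) hC)

lemma norm_tsum_le_mul_exp_neg_mul_iInf {r M : ℝ} (hd : ∀ i, 0 ≤ d i)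
    (hf : ∀ i, ‖f i‖ ≤ C * exp (-s * d i)) (hC : 0 ≤ C) (hr : 0 ≤ r) (hrts : r + t ≤ s)
    (ht : Summable fun i => exp (-t * d i)) (hM : ∑' i, exp (-t * d i) ≤ M) :
    ‖∑' i, f i‖ ≤ C * M * exp (-r * ⨅ i, d i) := by
  set K := C * exp (-r * ⨅ i, d i)
  have hK : 0 ≤ K := by positivity
  have hterm : ∀ i, ‖f i‖ ≤ K * exp (-t * d i) := fun i => by
    have hinf : (⨅ j, d j) ≤ d i := ciInf_le ⟨0, by rintro _ ⟨j, rfl⟩; exact hd j⟩ i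
    calc ‖f i‖ ≤ C * exp (-(r + t) * d i) :=
          (hf i).trans (mul_le_mul_of_nonneg_left
            (exp_neg_mul_le_exp_neg_mul_of_le (hd i) hrts) hC)
      _ = C * (exp (-r * d i) * exp (-t * d i)) := by rw [← exp_add]; ring_nf
      _ ≤ C * (exp (-r * ⨅ j, d j) * exp (-t * d i)) :=
          mul_le_mul_of_nonneg_left
            (mul_le_mul_of_nonneg_right (exp_le_exp.2 (by nlinarith)) (exp_pos _).le) hC
      _ = K * exp (-t * d i) := by ring
  calc ‖∑' i, f i‖ ≤ K * ∑' i, exp (-t * d i) := tsum_of_norm_bounded (ht.hasSum.mul_left K) hterm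
    _ ≤ K * M := by gcongr
    _ = C * M * exp (-r * ⨅ i, d i) := by ring

end ExponentialMajorant

section NontrivialSum

variable {X Γ E : Type*} [Group Γ] [MulAction Γ X] [AddCommMonoid E] [TopologicalSpace E]

def nontrivialConj (γ₀ : Γ) : {g : Γ // g ≠ 1} ≃ {g : Γ // g ≠ 1} :=
  (MulAut.conj γ₀).toEquiv.subtypeEquiv fun g => by simp

lemma tsum_nontrivial_smul_smul_eq {r : X × X → E}
    (hrinv : ∀ (γ : Γ) (x y : X), r (γ • x, γ • y) = r (x, y)) (γ₀ : Γ) (x y : X) :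
    ∑' γ : {g : Γ // g ≠ 1}, r (γ₀ • x, (γ.1 : Γ) • γ₀ • y)
      = ∑' γ : {g : Γ // g ≠ 1}, r (x, (γ.1 : Γ) • y) := by
  have hconj : ∀ γ : Γ, r (γ₀ • x, γ • γ₀ • y) = r (x, (γ₀⁻¹ * γ * γ₀) • y) := fun γ => by
    rw [← hrinv γ₀⁻¹, inv_smul_smul, smul_smul, smul_smul, mul_assoc]
  simp_rw [hconj]
  convert (nontrivialConj γ₀⁻¹).tsum_eq fun γ => r (x, (γ.1 : Γ) • y) using 4
  simp [nontrivialConj]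

end NontrivialSum

theorem stmt_7_general
    {X : Type*} [MetricSpace X]
    {Γ : Type*} [Group Γ] [MulAction Γ X]
    (δ ρ : ℝ)
    (hsum : ∀ ε > (0:ℝ), ∀ x y : X,
      Summable fun γ : Γ => Real.exp (-(δ + ρ + ε) * dist x (γ • y)))
    (hsumU : ∀ ε > (0:ℝ), ∃ Mε : ℝ, ∀ x y : X,
      (∑' γ : Γ, Real.exp (-(δ + ρ + ε) * dist x (γ • y))) ≤ Mε)
    (r : X × X → ℂ)
    (hrinv : ∀ (γ : Γ) (x y : X), r (γ • x, γ • y) = r (x, y))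
    (C s : ℝ) (hC : 0 < C) (hs : δ + ρ < s)
    (hr : ∀ x y : X, ‖r (x, y)‖ ≤ C * Real.exp (-s * dist x y)) :
    (∀ x y : X, Summable fun γ : {g : Γ // g ≠ 1} => r (x, (γ.1 : Γ) • y)) ∧
    (∀ (γ₀ : Γ) (x y : X),
        (∑' γ : {g : Γ // g ≠ 1}, r (γ₀ • x, (γ.1 : Γ) • (γ₀ • y)))
          = ∑' γ : {g : Γ // g ≠ 1}, r (x, (γ.1 : Γ) • y)) ∧
    (∀ r' : ℝ, 0 < r' → r' < s - δ - ρ → ∃ C' > (0:ℝ), ∀ x y : X,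
        ‖∑' γ : {g : Γ // g ≠ 1}, r (x, (γ.1 : Γ) • y)‖
          ≤ C' * Real.exp (-r' * ⨅ γ : {g : Γ // g ≠ 1}, dist x ((γ.1 : Γ) • y))) := by
  refine ⟨fun x y => ?_, tsum_nontrivial_smul_smul_eq hrinv, fun r' hr' hr's => ?_⟩
  · exact summable_of_norm_le_mul_exp_neg_mul (fun _ => dist_nonneg) (fun γ => hr x _) hC.le
      (by linarith) ((hsum (s - δ - ρ) (by linarith) x y).subtype _)
  · obtain ⟨M, hM⟩ := hsumU (s - δ - ρ - r') (by linarith)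
    refine ⟨C * (max M 0 + 1), by positivity, fun x y => ?_⟩
    have hsumxy := hsum (s - δ - ρ - r') (by linarith) x y
    have hsubtype : ∑' γ : {g : Γ // g ≠ 1}, exp (-(δ + ρ + (s - δ - ρ - r')) * dist x (γ.1 • y))
        ≤ max M 0 + 1 :=
      (Summable.tsum_subtype_le _ _ (fun _ => (exp_pos _).le) hsumxy).trans
        ((hM x y).trans ((le_max_left M 0).trans (le_add_of_nonneg_right zero_le_one)))
    exact norm_tsum_le_mul_exp_neg_mul_iInf (fun _ => dist_nonneg) (fun γ => hr x _) hC.le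
      hr'.le (by linarith) (hsumxy.subtype _) hsubtype

/-- method of images: convergence of the Poincaré-type series,
Lemma 5.6.  `Γ` acts isometrically on `X`, the Poincaré series
`Σ_γ e^{−(δ_Γ+ρ+ε) d(x,γy)}` converges (uniformly), and
`|r(x,y)| ≤ C e^{−s d(x,y)}` with `s > δ_Γ + ρ`.  Then
`Σ_{1≠γ∈Γ} r(x, γy)` converges, defines a `Γ`-invariant function, and for any
`r' < s − δ_Γ − ρ` is bounded by `C' e^{−r'·d₀(x,y)}` where
`d₀(x,y) = inf_{1≠γ} d(x, γy)`. -/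
theorem stmt_7
    {X : Type*} [MetricSpace X]
    {Γ : Type*} [Group Γ] [MulAction Γ X]
    (hiso : ∀ γ : Γ, Isometry fun x : X => γ • x)
    (δ ρ : ℝ)
    (hsum : ∀ ε > (0:ℝ), ∀ x y : X,
      Summable fun γ : Γ => Real.exp (-(δ + ρ + ε) * dist x (γ • y)))
    (hsumU : ∀ ε > (0:ℝ), ∃ Mε : ℝ, ∀ x y : X,
      (∑' γ : Γ, Real.exp (-(δ + ρ + ε) * dist x (γ • y))) ≤ Mε)
    (r : X × X → ℂ)
    (hrinv : ∀ (γ : Γ) (x y : X), r (γ • x, γ • y) = r (x, y))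
    (C s : ℝ) (hC : 0 < C) (hs : δ + ρ < s)
    (hr : ∀ x y : X, ‖r (x, y)‖ ≤ C * Real.exp (-s * dist x y)) :
    (∀ x y : X, Summable fun γ : {g : Γ // g ≠ 1} => r (x, (γ.1 : Γ) • y)) ∧
    (∀ (γ₀ : Γ) (x y : X),
        (∑' γ : {g : Γ // g ≠ 1}, r (γ₀ • x, (γ.1 : Γ) • (γ₀ • y)))
          = ∑' γ : {g : Γ // g ≠ 1}, r (x, (γ.1 : Γ) • y)) ∧
    (∀ r' : ℝ, 0 < r' → r' < s - δ - ρ → ∃ C' > (0:ℝ), ∀ x y : X,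
        ‖∑' γ : {g : Γ // g ≠ 1}, r (x, (γ.1 : Γ) • y)‖
          ≤ C' * Real.exp (-r' * ⨅ γ : {g : Γ // g ≠ 1}, dist x ((γ.1 : Γ) • y))) :=
  stmt_7_general δ ρ hsum hsumU r hrinv C s hC hs hr
end

section
/- Let f: D → ℂ be holomorphic on a punctured disc around z₀ with a pole at z₀, and suppose for each z in the punctured disc, f(z) is given by a function F(z, a) of an auxiliary parameter a ∈ [1,∞) admitting an asymptotic expansion F(z,a) ∼ Σ_{j} a^{−μ_j(z)} (possibly with meromorphic coefficients) locally uniformly in z as a → ∞, with exponents μ_j holomorphic. Then the residue res_{z=z₀} F(z, a) = (1/2πi)∮ F(z,a) dz admits as a → ∞ an asymptotic expansion in terms a^{−μ_j(z₀)} log(a)^m with m bounded by the pole order. -/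
/-!
Write `g = h / (z - z₀) ^ (n + 1)` with `h` analytic and `a ^ (-μ) = exp (w μ)` with
`w = -log a`. By Cauchy's formula for derivatives the residue is
`∂ⁿ (exp (w μ) h) (z₀) / n!`, and repeated use of the product rule shows that
`∂ⁿ (exp (w μ) h) = exp (w μ) · Pₙ(w)` for a polynomial `Pₙ` of degree at most `n` whose
coefficients are analytic functions.
-/

open Finset Metric Complex Polynomial Topology

/-- `expDerivCoeff μ h n m` is the coefficient of `w ^ m` in `exp (-w μ) ∂ⁿ (exp (w μ) h)`;
the recursion is the product rule `∂ (exp (w μ) q) = exp (w μ) (∂q + w μ' q)`. -/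
noncomputable def expDerivCoeff (μ h : ℂ → ℂ) : ℕ → ℕ → ℂ → ℂ
  | 0, 0 => h
  | 0, _ + 1 => 0
  | n + 1, 0 => deriv (expDerivCoeff μ h n 0)
  | n + 1, m + 1 => deriv (expDerivCoeff μ h n (m + 1)) + deriv μ * expDerivCoeff μ h n m

namespace expDerivCoeff

variable {μ h : ℂ → ℂ} {s : Set ℂ}

theorem eq_zero_of_lt : ∀ {n m : ℕ}, n < m → expDerivCoeff μ h n m = 0
  | 0, _ + 1, _ => rfl
  | n + 1, m + 1, hnm => by
    rw [expDerivCoeff, eq_zero_of_lt (by omega : n < m + 1), eq_zero_of_lt (by omega : n < m),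
      mul_zero, add_zero]
    exact deriv_const' 0

theorem analyticOnNhd (hμ : AnalyticOnNhd ℂ μ s) (hh : AnalyticOnNhd ℂ h s) :
    ∀ n m, AnalyticOnNhd ℂ (expDerivCoeff μ h n m) s
  | 0, 0 => hh
  | 0, _ + 1 => analyticOnNhd_const
  | n + 1, 0 => (analyticOnNhd hμ hh n 0).deriv
  | n + 1, m + 1 =>
    (analyticOnNhd hμ hh n (m + 1)).deriv.add (hμ.deriv.mul (analyticOnNhd hμ hh n m))

theorem sum_pow_mul_succ (w z : ℂ) (n : ℕ) :
    ∑ m ∈ range (n + 2), w ^ m * expDerivCoeff μ h (n + 1) m z =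
      w * deriv μ z * ∑ m ∈ range (n + 1), w ^ m * expDerivCoeff μ h n m z +
        ∑ m ∈ range (n + 1), w ^ m * deriv (expDerivCoeff μ h n m) z := by
  have hderiv : ∑ k ∈ range (n + 1), w ^ (k + 1) * deriv (expDerivCoeff μ h n (k + 1)) z +
      deriv (expDerivCoeff μ h n 0) z =
        ∑ m ∈ range (n + 1), w ^ m * deriv (expDerivCoeff μ h n m) z := by
    have htop : deriv (expDerivCoeff μ h n (n + 1)) z = 0 := by
      rw [eq_zero_of_lt n.lt_succ_self]; exact deriv_const z 0
    simpa [htop, sum_range_succ _ (n + 1)] using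
      (sum_range_succ' (fun m ↦ w ^ m * deriv (expDerivCoeff μ h n m) z) (n + 1)).symm
  rw [sum_range_succ', ← hderiv, mul_sum]
  simp only [expDerivCoeff, Pi.add_apply, Pi.mul_apply, pow_zero, one_mul, mul_add,
    sum_add_distrib]
  rw [add_right_comm, add_comm]
  congr 1
  exact sum_congr rfl fun m _ ↦ by ring

theorem hasDerivAt_cexp_mul_sum (hμ : AnalyticOnNhd ℂ μ s) (hh : AnalyticOnNhd ℂ h s)
    {z : ℂ} (hz : z ∈ s) (w : ℂ) (n : ℕ) :
    HasDerivAt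
      (fun u ↦ cexp (w * μ u) * ∑ m ∈ range (n + 1), w ^ m * expDerivCoeff μ h n m u)
      (cexp (w * μ z) * ∑ m ∈ range (n + 2), w ^ m * expDerivCoeff μ h (n + 1) m z) z := by
  have hexp : HasDerivAt (fun u ↦ cexp (w * μ u)) (cexp (w * μ z) * (w * deriv μ z)) z :=
    ((hμ z hz).differentiableAt.hasDerivAt.const_mul w).cexp
  have hsum : HasDerivAt (fun u ↦ ∑ m ∈ range (n + 1), w ^ m * expDerivCoeff μ h n m u)
      (∑ m ∈ range (n + 1), w ^ m * deriv (expDerivCoeff μ h n m) z) z :=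
    HasDerivAt.fun_sum fun m _ ↦
      ((analyticOnNhd hμ hh n m z hz).differentiableAt.hasDerivAt).const_mul (w ^ m)
  refine (hexp.fun_mul hsum).congr_deriv ?_
  rw [sum_pow_mul_succ]
  ring

theorem iteratedDeriv_cexp_mul (hs : IsOpen s) (hμ : AnalyticOnNhd ℂ μ s)
    (hh : AnalyticOnNhd ℂ h s) (w : ℂ) :
    ∀ n, ∀ z ∈ s, iteratedDeriv n (fun u ↦ cexp (w * μ u) * h u) z =
      cexp (w * μ z) * ∑ m ∈ range (n + 1), w ^ m * expDerivCoeff μ h n m z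
  | 0, z, _ => by simp [expDerivCoeff]
  | n + 1, z, hz => by
    have hev : iteratedDeriv n (fun u ↦ cexp (w * μ u) * h u) =ᶠ[𝓝 z]
        fun u ↦ cexp (w * μ u) * ∑ m ∈ range (n + 1), w ^ m * expDerivCoeff μ h n m u :=
      Filter.eventually_of_mem (hs.mem_nhds hz) (iteratedDeriv_cexp_mul hs hμ hh w n)
    rw [iteratedDeriv_succ, hev.deriv_eq, (hasDerivAt_cexp_mul_sum hμ hh hz w n).deriv]

end expDerivCoeff

theorem Complex.ofReal_cpow_neg_eq_cexp {a : ℝ} (ha : 0 < a) (w : ℂ) :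
    (a : ℂ) ^ (-w) = cexp (-(Real.log a : ℂ) * w) := by
  rw [cpow_def_of_ne_zero (ofReal_ne_zero.mpr ha.ne'), ofReal_log ha.le, mul_neg, neg_mul]

theorem exists_polynomial_residue_cpow_neg_mul (μ g : ℂ → ℂ) (z₀ : ℂ) {R : ℝ}
    (hR : 0 < R) (hμ : ∀ z ∈ closedBall z₀ R, AnalyticAt ℂ μ z) (hg : MeromorphicAt g z₀)
    (hg' : ∀ z ∈ closedBall z₀ R, z ≠ z₀ → AnalyticAt ℂ g z) :
    ∃ P : ℂ[X], ∀ a : ℝ, 0 < a →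
      (2 * Real.pi * I)⁻¹ * (∮ z in C(z₀, R), (a : ℂ) ^ (-μ z) * g z) =
        (a : ℂ) ^ (-μ z₀) * P.eval (Real.log a : ℂ) := by
  obtain ⟨n, hn⟩ := hg
  set h : ℂ → ℂ := fun z ↦ (z - z₀) ^ (n + 1) * g z
  have hh : ∀ z ∈ closedBall z₀ R, AnalyticAt ℂ h z := by
    intro z hz
    rcases eq_or_ne z z₀ with rfl | hne
    · have hfac : h = fun w ↦ (w - z) * ((w - z) ^ n • g w) := by
        funext w; simp only [h, smul_eq_mul]; ring
      rw [hfac]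
      exact (analyticAt_id.sub analyticAt_const).fun_mul hn
    · exact ((analyticAt_id.sub analyticAt_const).pow _).mul (hg' z hz hne)
  set s := {z | AnalyticAt ℂ μ z} ∩ {z | AnalyticAt ℂ h z}
  have hs : IsOpen s := (isOpen_analyticAt ℂ μ).inter (isOpen_analyticAt ℂ h)
  have hball : closedBall z₀ R ⊆ s := fun z hz ↦ ⟨hμ z hz, hh z hz⟩
  refine ⟨C (n.factorial : ℂ)⁻¹ *
    ∑ m ∈ range (n + 1), (-X) ^ m * C (expDerivCoeff μ h n m z₀), fun a ha ↦ ?_⟩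
  set f : ℂ → ℂ := fun z ↦ cexp (-(Real.log a : ℂ) * μ z) * h z
  have hf : DifferentiableOn ℂ f (closedBall z₀ R) := fun z hz ↦
    (((hμ z hz).differentiableAt.const_mul _).cexp.mul
      (hh z hz).differentiableAt).differentiableWithinAt
  have hint : (∮ z in C(z₀, R), (a : ℂ) ^ (-μ z) * g z) =
      ∮ z in C(z₀, R), (1 / (z - z₀) ^ (n + 1)) • f z := by
    refine circleIntegral.integral_congr hR.le fun z hz ↦ ?_
    have hz₀ : z - z₀ ≠ 0 := sub_ne_zero.mpr (ne_of_mem_sphere hz hR.ne')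
    simp only [f, h, smul_eq_mul, Complex.ofReal_cpow_neg_eq_cexp ha]
    field_simp
  rw [hint, hf.circleIntegral_one_div_sub_center_pow_smul hR n,
    expDerivCoeff.iteratedDeriv_cexp_mul hs (fun z hz ↦ hz.1) (fun z hz ↦ hz.2) _ n z₀
      (hball (mem_closedBall_self hR.le)), Complex.ofReal_cpow_neg_eq_cexp ha]
  simp only [eval_mul, eval_C, eval_finsetSum, eval_pow, eval_neg, eval_X, smul_eq_mul]
  field_simp

/-- residues of families with exponential asymptotics produce
log-terms, mechanism of Lemma 5.12.  If `F(z,a) = Σ_j a^{−μ_j(z)} g_j(z)` with `μ_j`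
holomorphic near `z₀` and `g_j` meromorphic at `z₀` (analytic on the punctured disc),
then the contour integral `(2πi)⁻¹ ∮_{|z−z₀|=r} F(z,a) dz` (the residue of `F(·,a)`
at `z₀`) has, as a function of `a`, the form
`Σ_j a^{−μ_j(z₀)} Σ_{m≤N} c_{j,m} (log a)^m`, with `N` bounded by the pole orders. -/
theorem stmt_10 {ι : Type*}
    (J : Finset ι) (μ : ι → ℂ → ℂ) (g : ι → ℂ → ℂ)
    (z₀ : ℂ) (rr : ℝ) (hrr : 0 < rr)
    (hμ : ∀ j ∈ J, ∀ z ∈ Metric.closedBall z₀ rr, AnalyticAt ℂ (μ j) z)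
    (hg : ∀ j ∈ J, MeromorphicAt (g j) z₀)
    (hg' : ∀ j ∈ J, ∀ z ∈ Metric.closedBall z₀ rr, z ≠ z₀ → AnalyticAt ℂ (g j) z) :
    ∃ (N : ℕ) (c : ι → ℕ → ℂ), ∀ a : ℝ, 1 < a →
      (2 * (Real.pi : ℂ) * Complex.I)⁻¹ *
        (∮ z in C(z₀, rr), ∑ j ∈ J, (a:ℂ) ^ (-(μ j z)) * g j z)
      = ∑ j ∈ J, (a:ℂ) ^ (-(μ j z₀)) *
          ∑ m ∈ range (N+1), c j m * ((Real.log a : ℂ)) ^ m := by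
  choose! P hP using fun j hj ↦
    exists_polynomial_residue_cpow_neg_mul (μ j) (g j) z₀ hrr (hμ j hj) (hg j hj) (hg' j hj)
  refine ⟨J.sup fun j ↦ (P j).natDegree, fun j m ↦ (P j).coeff m, fun a ha ↦ ?_⟩
  have ha₀ : 0 < a := one_pos.trans ha
  have hint : ∀ j ∈ J, CircleIntegrable (fun z ↦ (a : ℂ) ^ (-μ j z) * g j z) z₀ rr :=
    fun j hj ↦ ContinuousOn.circleIntegrable hrr.le fun z hz ↦
      have hz' := sphere_subset_closedBall hz
      (((continuousAt_const_cpow (ofReal_ne_zero.mpr ha₀.ne')).comp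
        (hμ j hj z hz').continuousAt.neg).mul
          (hg' j hj z hz' (ne_of_mem_sphere hz hrr.ne')).continuousAt).continuousWithinAt
  rw [circleIntegral.integral_fun_sum hint, mul_sum]
  refine sum_congr rfl fun j hj ↦ ?_
  have hdeg : (P j).natDegree < J.sup (fun j ↦ (P j).natDegree) + 1 :=
    Nat.lt_succ_of_le (le_sup (f := fun j ↦ (P j).natDegree) hj)
  rw [hP j hj a ha₀, eval_eq_sum_range' hdeg]
end
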